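/- Reproducing-kernel property of the SAFT-bandlimited space: let σ > 0 and let f : ℝ → ℂ be continuous, in L¹(ℝ) ∩ L²(ℝ), whose SAFT F_A vanishes outside [−σ, σ]. Then for every t ∈ ℝ, f(t) = ∫_ℝ f(x) · exp((Complex.I/(2b)) · (a·(x² − t²) + 2·p·(x − t))) · sin(σ·(x − t)/b)/(π·(x − t)) dx, where the kernel value at x = t is taken to be σ/(πb). -/

import Mathlib

/-!
Multiplying `f` by the chirp `x ↦ exp (i (a x² + 2 p x) / (2b))` turns the SAFT into an ordinary
Fourier transform: `F_A(2πbξ)` is a unimodular factor times `𝓕 g ξ` for `g = f · chirp`.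
So `𝓕 g` vanishes outside `[-c, c]` with `c = σ / (2πb)`, and Fourier inversion together with the
self-adjointness of `𝓕` reproduces `g` against the Fourier transform of the window
`𝟙_[-c,c](ξ) e^{2πiξt}`, which is the sinc kernel `2c sinc (2πc (x - t))`.
Dividing by the chirp at `t` gives the stated kernel.
-/

open MeasureTheory Real

/-- The Special Affine Fourier Transform (SAFT) with parameters `a, b, c, d, p, q`,
where `Ω = 2*(b*q - d*p)`. -/
noncomputable def SAFT (a b d p q : ℝ) (f : ℝ → ℂ) (ω : ℝ) : ℂ :=
  (Real.sqrt (2 * π * b) : ℂ)⁻¹ *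
    ∫ t : ℝ, f t * Complex.exp (Complex.I / (2 * b) *
      ((a * t ^ 2 + d * ω ^ 2 - 2 * t * ω + 2 * p * t + 2 * (b * q - d * p) * ω : ℝ) : ℂ))

open FourierTransform

theorem setIntegral_Icc_exp_mul_I {c : ℝ} (hc : 0 ≤ c) (y : ℝ) :
    ∫ ξ in Set.Icc (-c) c, Complex.exp (↑(y * ξ) * Complex.I) = 2 * c * sinc (c * y) := by
  rw [integral_Icc_eq_integral_Ioc, ← intervalIntegral.integral_of_le (by linarith)]
  rcases eq_or_ne y 0 with rfl | hy
  · simp [two_mul]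
  have hy' : (y : ℂ) ≠ 0 := Complex.ofReal_ne_zero.2 hy
  have hsubst := intervalIntegral.integral_comp_mul_left
    (fun u : ℝ => Complex.exp (↑u * Complex.I)) hy (a := -c) (b := c)
  push_cast at hsubst ⊢
  rw [hsubst, mul_neg, integral_exp_mul_I_eq_sinc, mul_comm c y, Complex.real_smul]
  push_cast
  field_simp

theorem fourier_indicator_Icc_exp {c : ℝ} (hc : 0 ≤ c) (t x : ℝ) :
    𝓕 ((Set.Icc (-c) c).indicator fun ξ : ℝ => Complex.exp (↑(2 * π * ξ * t) * Complex.I)) x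
      = 2 * c * sinc (2 * π * c * (x - t)) := by
  calc _ = ∫ ξ in Set.Icc (-c) c, Complex.exp (↑(2 * π * (t - x) * ξ) * Complex.I) := by
        rw [Real.fourier_real_eq_integral_exp_smul, ← integral_indicator measurableSet_Icc]
        congr 1 with ξ
        by_cases hξ : ξ ∈ Set.Icc (-c) c
        · simp only [Set.indicator_of_mem hξ, smul_eq_mul, ← Complex.exp_add]
          push_cast
          ring_nf
        · simp [hξ]
    _ = _ := by
      rw [setIntegral_Icc_exp_mul_I hc, ← sinc_neg]
      congr 3
      ring

theorem Continuous.eq_integral_mul_sinc_of_fourier_eq_zero {g : ℝ → ℂ} (hgc : Continuous g)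
    (hg : Integrable g) {c : ℝ} (hc : 0 ≤ c) (hband : ∀ ξ, c < |ξ| → 𝓕 g ξ = 0) (t : ℝ) :
    g t = ∫ x, g x * (2 * c * sinc (2 * π * c * (x - t)) : ℝ) := by
  have hvanish : ∀ ξ ∉ Set.Icc (-c) c, 𝓕 g ξ = 0 := fun ξ hξ =>
    hband ξ (not_le.1 fun h => hξ (abs_le.1 h))
  have hFg : Integrable (𝓕 g) :=
    (VectorFourier.fourierIntegral_continuous Real.continuous_fourierChar continuous_inner hg)
      |>.integrable_of_hasCompactSupport (HasCompactSupport.intro isCompact_Icc hvanish)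
  set χ : ℝ → ℂ :=
    (Set.Icc (-c) c).indicator fun ξ => Complex.exp (↑(2 * π * ξ * t) * Complex.I)
  have hχ : Integrable χ :=
    (Continuous.integrableOn_Icc (by fun_prop)).integrable_indicator measurableSet_Icc
  calc g t = 𝓕⁻ (𝓕 g) t := by rw [hgc.fourierInv_fourier_eq hg hFg]
    _ = ∫ ξ, 𝓕 g ξ • χ ξ := by
      rw [Real.fourierInv_eq']
      congr 1 with ξ
      by_cases hξ : ξ ∈ Set.Icc (-c) c
      · simp only [χ, Set.indicator_of_mem hξ, smul_eq_mul, Real.inner_apply]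
        ring_nf
      · simp [χ, hξ, hvanish ξ hξ]
    _ = ∫ x, g x • 𝓕 χ x := by
      refine (VectorFourier.integral_fourierIntegral_smul_eq_flip (L := innerₗ ℝ)
        (μ := volume) (ν := volume) Real.continuous_fourierChar continuous_inner hg hχ).trans ?_
      congr 1 with x
      simp [Real.fourier_real_eq, VectorFourier.fourierIntegral, mul_comm]
    _ = _ := by
      simp only [χ, fourier_indicator_Icc_exp hc, smul_eq_mul]
      push_cast
      rfl

theorem two_mul_mul_sinc_eq_ite (c y : ℝ) :
    2 * c * sinc (2 * π * c * y) = if y = 0 then 2 * c else sin (2 * π * c * y) / (π * y) := by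
  split_ifs with hy
  · simp [hy]
  rcases eq_or_ne c 0 with rfl | hc
  · simp
  rw [sinc_of_ne_zero (by positivity)]
  field_simp

section Chirp

variable (a b p : ℝ)

noncomputable def saftChirp (x : ℝ) : ℂ :=
  Complex.exp (Complex.I / (2 * b) * ((a * x ^ 2 + 2 * p * x : ℝ) : ℂ))

theorem norm_saftChirp (x : ℝ) : ‖saftChirp a b p x‖ = 1 := by
  rw [saftChirp, show Complex.I / (2 * b) * ((a * x ^ 2 + 2 * p * x : ℝ) : ℂ) =
      (((a * x ^ 2 + 2 * p * x) / (2 * b) : ℝ) : ℂ) * Complex.I by push_cast; ring,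
    Complex.norm_exp_ofReal_mul_I]

theorem continuous_saftChirp : Continuous (saftChirp a b p) := by
  unfold saftChirp
  fun_prop

theorem saftChirp_mul_inv (x t : ℝ) :
    saftChirp a b p x * (saftChirp a b p t)⁻¹ =
      Complex.exp (Complex.I / (2 * b) * ((a * (x ^ 2 - t ^ 2) + 2 * p * (x - t) : ℝ) : ℂ)) := by
  rw [saftChirp, saftChirp, ← Complex.exp_neg, ← Complex.exp_add]
  congr 1
  push_cast
  ring

theorem MeasureTheory.Integrable.mul_saftChirp {f : ℝ → ℂ} (hf : Integrable f) :
    Integrable fun x => f x * saftChirp a b p x :=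
  hf.mul_bdd (continuous_saftChirp a b p).aestronglyMeasurable
    (.of_forall fun x => (norm_saftChirp a b p x).le)

end Chirp

theorem SAFT_eq_fourier_mul_saftChirp {b : ℝ} (hb : b ≠ 0) (a d p q : ℝ) (f : ℝ → ℂ) (ξ : ℝ) :
    SAFT a b d p q f (2 * π * b * ξ) = (Real.sqrt (2 * π * b) : ℂ)⁻¹ *
      Complex.exp (Complex.I / (2 * b) *
        ((d * (2 * π * b * ξ) ^ 2 + 2 * (b * q - d * p) * (2 * π * b * ξ) : ℝ) : ℂ)) *
      𝓕 (fun x => f x * saftChirp a b p x) ξ := by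
  have hb' : (b : ℂ) ≠ 0 := Complex.ofReal_ne_zero.2 hb
  rw [SAFT, Real.fourier_real_eq_integral_exp_smul, ← integral_const_mul, ← integral_const_mul]
  congr 1 with x
  simp only [saftChirp, smul_eq_mul, mul_assoc, mul_left_comm _ (f x), ← Complex.exp_add]
  congr 3
  push_cast
  field_simp
  ring

theorem fourier_mul_saftChirp_eq_zero {a b d p q σ : ℝ} {f : ℝ → ℂ} (hb : 0 < b)
    (hband : ∀ ω : ℝ, σ < |ω| → SAFT a b d p q f ω = 0) {ξ : ℝ} (hξ : σ / (2 * π * b) < |ξ|) :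
    𝓕 (fun x => f x * saftChirp a b p x) ξ = 0 := by
  have hω : σ < |2 * π * b * ξ| := by
    rw [abs_mul, abs_of_pos (by positivity)]
    rwa [div_lt_iff₀' (by positivity)] at hξ
  have hsqrt : (Real.sqrt (2 * π * b) : ℂ) ≠ 0 := by
    exact_mod_cast (Real.sqrt_pos.2 (by positivity)).ne'
  have h := hband _ hω
  rw [SAFT_eq_fourier_mul_saftChirp hb.ne'] at h
  simpa [hsqrt, Complex.exp_ne_zero] using h

theorem saft_reproducing_kernel_general (a b d p q : ℝ) (hb : 0 < b)
    (σ : ℝ) (hσ : 0 < σ)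
    (f : ℝ → ℂ) (hfc : Continuous f) (hf1 : Integrable f)
    (hband : ∀ ω : ℝ, σ < |ω| → SAFT a b d p q f ω = 0) :
    ∀ t : ℝ, f t =
      ∫ x : ℝ, f x *
        Complex.exp (Complex.I / (2 * b) * ((a * (x ^ 2 - t ^ 2) + 2 * p * (x - t) : ℝ) : ℂ)) *
        (if x = t then ((σ / (π * b) : ℝ) : ℂ)
          else ((Real.sin (σ * (x - t) / b) / (π * (x - t)) : ℝ) : ℂ)) := by
  intro t
  set c := σ / (2 * π * b) with hc
  have hrep : f t * saftChirp a b p t =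
      ∫ x, f x * saftChirp a b p x * (2 * c * sinc (2 * π * c * (x - t)) : ℝ) :=
    (hfc.mul (continuous_saftChirp a b p)).eq_integral_mul_sinc_of_fourier_eq_zero
      (hf1.mul_saftChirp a b p) (by positivity)
      (fun _ hξ => fourier_mul_saftChirp_eq_zero hb hband hξ) t
  have hker : ∀ x : ℝ, (if x = t then ((σ / (π * b) : ℝ) : ℂ)
      else ((Real.sin (σ * (x - t) / b) / (π * (x - t)) : ℝ) : ℂ)) =
      ((2 * c * sinc (2 * π * c * (x - t)) : ℝ) : ℂ) := by
    intro x
    have h2c : 2 * c = σ / (π * b) := by rw [hc]; field_simp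
    have harg : 2 * π * c * (x - t) = σ * (x - t) / b := by rw [hc]; field_simp
    rw [two_mul_mul_sinc_eq_ite]
    simp only [sub_eq_zero, h2c, harg]
    split_ifs <;> rfl
  calc f t = (saftChirp a b p t)⁻¹ * (f t * saftChirp a b p t) := by
        field_simp [saftChirp, Complex.exp_ne_zero]
    _ = _ := by
      rw [hrep, ← integral_const_mul]
      congr 1 with x
      rw [hker, ← saftChirp_mul_inv]
      ring

/-- Reproducing-kernel property of the space of functions bandlimited to `[-σ, σ]`
in the SAFT domain; the diagonal value of the kernel is `σ/(πb)`. -/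
theorem saft_reproducing_kernel (a b c d p q : ℝ) (hb : 0 < b) (habcd : a * d - b * c = 1)
    (σ : ℝ) (hσ : 0 < σ)
    (f : ℝ → ℂ) (hfc : Continuous f) (hf1 : Integrable f) (hf2 : MemLp f 2 volume)
    (hband : ∀ ω : ℝ, σ < |ω| → SAFT a b d p q f ω = 0) :
    ∀ t : ℝ, f t =
      ∫ x : ℝ, f x *
        Complex.exp (Complex.I / (2 * b) * ((a * (x ^ 2 - t ^ 2) + 2 * p * (x - t) : ℝ) : ℂ)) *
        (if x = t then ((σ / (π * b) : ℝ) : ℂ)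
          else ((Real.sin (σ * (x - t) / b) / (π * (x - t)) : ℝ) : ℂ)) :=
  saft_reproducing_kernel_general a b d p q hb σ hσ f hfc hf1 hband
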